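/- For measurable functions x, y on [0,∞) vanishing at infinity in measure, the product xy is submajorized by the product of the decreasing rearrangements: ∫₀ᵗ (xy)*(s) ds ≤ ∫₀ᵗ x*(s) y*(s) ds for every t > 0. -/

import Mathlib

open MeasureTheory

/-- The decreasing rearrangement of `|f|` with respect to the measure `μ`. -/
noncomputable def rearr {α : Type*} [MeasurableSpace α] (μ : Measure α)
    (f : α → ℝ) (t : ℝ) : ℝ :=
  sInf {s : ℝ | 0 ≤ s ∧ μ {u | s < |f u|} ≤ ENNReal.ofReal t}

/-- `f` vanishes at infinity in measure: every level set `{|f| > ε}` with `ε > 0`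
has finite measure. -/
def VanishesInMeasure {α : Type*} [MeasurableSpace α] (μ : Measure α) (f : α → ℝ) : Prop :=
  ∀ ε : ℝ, 0 < ε → μ {u | ε < |f u|} < ⊤

/-- A symmetric function space on a measure space: a linear subspace of the measurable
functions vanishing at infinity in measure, with a complete norm that is monotone with
respect to comparison of decreasing rearrangements. -/
structure SymmFnSpace (α : Type*) [MeasurableSpace α] (μ : Measure α) where
  carrier : Set (α → ℝ)
  N : (α → ℝ) → ℝ
  zero_mem : (0 : α → ℝ) ∈ carrier
  add_mem : ∀ {x y : α → ℝ}, x ∈ carrier → y ∈ carrier → x + y ∈ carrier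
  smul_mem : ∀ (c : ℝ) {x : α → ℝ}, x ∈ carrier → c • x ∈ carrier
  measurable_mem : ∀ {x : α → ℝ}, x ∈ carrier → Measurable x
  vanish_mem : ∀ {x : α → ℝ}, x ∈ carrier → VanishesInMeasure μ x
  norm_nonneg : ∀ x : α → ℝ, 0 ≤ N x
  norm_eq_zero : ∀ {x : α → ℝ}, x ∈ carrier → N x = 0 → x =ᵐ[μ] 0
  norm_add_le : ∀ {x y : α → ℝ}, x ∈ carrier → y ∈ carrier → N (x + y) ≤ N x + N y
  norm_smul : ∀ (c : ℝ) (x : α → ℝ), N (c • x) = |c| * N x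
  symm : ∀ {x y : α → ℝ}, Measurable x → VanishesInMeasure μ x → y ∈ carrier →
    (∀ t : ℝ, 0 < t → rearr μ x t ≤ rearr μ y t) → x ∈ carrier ∧ N x ≤ N y
  complete : ∀ f : ℕ → (α → ℝ), (∀ n, f n ∈ carrier) →
    (∀ ε : ℝ, 0 < ε → ∃ n₀, ∀ m ≥ n₀, ∀ n ≥ n₀, N (f m - f n) < ε) →
    ∃ g ∈ carrier, ∀ ε : ℝ, 0 < ε → ∃ n₀, ∀ n ≥ n₀, N (f n - g) < ε

open scoped ENNReal

/-- Lebesgue measure on the half-line `[0, ∞)`. -/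
noncomputable def mu0 : MeasureTheory.Measure ℝ := MeasureTheory.volume.restrict (Set.Ici 0)

/-! With `a = x^*(t)` and `b = y^*(t)`, the identity `pq - ab = (p - a)q + a(q - b)` gives
`(|xy| - ab)₊ ≤ (|x| - a)₊ |y| + a (|y| - b)₊` pointwise (`ENNReal.ofReal` plays the role of
the positive part throughout). Truncating at height `ab` bounds `∫₀ᵗ (xy)^*` by
`abt + ∫ ((xy)^* - ab)₊`; since `f^*` and `|f|` are equimeasurable, truncated integrals may be
computed on either side. The Hardy–Littlewood inequality `∫ (|x| - a)₊ |y| ≤ ∫ (x^* - a)₊ y^*`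
follows from the layer-cake formula, because the level sets of rearrangements are nested intervals
`(0, μ {|f| > λ})`. Finally, `x^* ≥ a` and `y^* ≥ b` on `(0, t]` while the truncated terms vanish
beyond `t`, so the resulting bound is exactly `∫₀ᵗ x^* y^*`. -/

open Set Filter

section LayerCake

variable {β : Type*} [MeasurableSpace β] {μ : Measure β}

theorem lintegral_ofReal_eq_setLIntegral_measure_lt {f : β → ℝ} (hf : AEMeasurable f μ) :
    ∫⁻ u, ENNReal.ofReal (f u) ∂μ = ∫⁻ l in Ioi 0, μ {u | l < f u} := by
  have h := lintegral_eq_lintegral_meas_lt μ (ae_of_all _ fun u => le_max_right (f u) 0)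
    (hf.max aemeasurable_const)
  simp only [ENNReal.ofReal_max, ENNReal.ofReal_zero, zero_le, max_eq_left] at h
  rw [h]
  refine setLIntegral_congr_fun measurableSet_Ioi fun l (hl : 0 < l) => ?_
  simp only [lt_max_iff, hl.not_gt, or_false]

theorem lintegral_ofReal_mul_ofReal_eq [SFinite μ] {f g : β → ℝ} (hf : AEMeasurable f μ)
    (hg : AEMeasurable g μ) :
    ∫⁻ u, ENNReal.ofReal (f u) * ENNReal.ofReal (g u) ∂μ
      = ∫⁻ m in Ioi 0, ∫⁻ l in Ioi 0, μ ({u | l < f u} ∩ {u | m < g u}) := by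
  have hF : AEMeasurable (fun u => ENNReal.ofReal (f u)) μ := hf.ennreal_ofReal
  refine (lintegral_withDensity_eq_lintegral_mul₀ hF hg.ennreal_ofReal).symm.trans ?_
  rw [lintegral_ofReal_eq_setLIntegral_measure_lt
      (hg.mono_ac (withDensity_absolutelyContinuous μ _))]
  refine lintegral_congr fun m => ?_
  rw [withDensity_apply' _, lintegral_ofReal_eq_setLIntegral_measure_lt hf.restrict]
  refine lintegral_congr fun l => ?_
  exact Measure.restrict_apply₀ (nullMeasurableSet_lt aemeasurable_const hf.restrict)

theorem lintegral_ofReal_mul_ofReal_le_of_measure_inter_le {γ : Type*} [MeasurableSpace γ]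
    {ν : Measure γ} [SFinite μ] [SFinite ν] {f g : β → ℝ} {F G : γ → ℝ}
    (hf : AEMeasurable f μ) (hg : AEMeasurable g μ) (hF : AEMeasurable F ν)
    (hG : AEMeasurable G ν)
    (h : ∀ l > 0, ∀ m > 0,
      μ ({u | l < f u} ∩ {u | m < g u}) ≤ ν ({v | l < F v} ∩ {v | m < G v})) :
    ∫⁻ u, ENNReal.ofReal (f u) * ENNReal.ofReal (g u) ∂μ
      ≤ ∫⁻ v, ENNReal.ofReal (F v) * ENNReal.ofReal (G v) ∂ν := by
  rw [lintegral_ofReal_mul_ofReal_eq hf hg, lintegral_ofReal_mul_ofReal_eq hF hG]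
  exact setLIntegral_mono' measurableSet_Ioi fun m hm =>
    setLIntegral_mono' measurableSet_Ioi fun l hl => h l hl m hm

end LayerCake

theorem ENNReal.ofReal_mul_sub_mul_le {p q a b : ℝ} (hq : 0 ≤ q) (ha : 0 ≤ a) :
    ENNReal.ofReal (p * q - a * b)
      ≤ ENNReal.ofReal (p - a) * ENNReal.ofReal q + ENNReal.ofReal a * ENNReal.ofReal (q - b) := by
  rw [← ENNReal.ofReal_mul' hq, ← ENNReal.ofReal_mul ha,
    show p * q - a * b = (p - a) * q + a * (q - b) by ring]
  exact ENNReal.ofReal_add_le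

theorem lintegral_ofReal_abs_mul_sub_le {α : Type*} [MeasurableSpace α] {μ : Measure α}
    {x y : α → ℝ} (hxm : Measurable x) (hym : Measurable y) {a : ℝ} (ha : 0 ≤ a) (b : ℝ) :
    ∫⁻ u, ENNReal.ofReal (|(x * y) u| - a * b) ∂μ
      ≤ ∫⁻ u, ENNReal.ofReal (|x u| - a) * ENNReal.ofReal |y u| ∂μ
        + ENNReal.ofReal a * ∫⁻ u, ENNReal.ofReal (|y u| - b) ∂μ := by
  calc ∫⁻ u, ENNReal.ofReal (|(x * y) u| - a * b) ∂μ
      ≤ ∫⁻ u, (ENNReal.ofReal (|x u| - a) * ENNReal.ofReal |y u|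
          + ENNReal.ofReal a * ENNReal.ofReal (|y u| - b)) ∂μ :=
        lintegral_mono fun u => by
          rw [Pi.mul_apply, abs_mul]
          exact ENNReal.ofReal_mul_sub_mul_le (abs_nonneg _) ha
    _ = _ := by
        rw [lintegral_add_left (by fun_prop), lintegral_const_mul _ (by fun_prop)]

theorem setLIntegral_ofReal_le_mul_measure_add {α : Type*} [MeasurableSpace α] {μ : Measure α}
    (s : Set α) (F : α → ℝ) (c : ℝ) :
    ∫⁻ u in s, ENNReal.ofReal (F u) ∂μ
      ≤ ENNReal.ofReal c * μ s + ∫⁻ u in s, ENNReal.ofReal (F u - c) ∂μ := by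
  calc ∫⁻ u in s, ENNReal.ofReal (F u) ∂μ
      ≤ ∫⁻ u in s, (ENNReal.ofReal c + ENNReal.ofReal (F u - c)) ∂μ :=
        lintegral_mono fun u => by
          simpa only [add_sub_cancel] using ENNReal.ofReal_add_le (p := c) (q := F u - c)
    _ = _ := by rw [lintegral_add_left measurable_const, setLIntegral_const]

theorem setLIntegral_Ioi_eq_setLIntegral_Ioc {F : ℝ → ℝ≥0∞} {a b : ℝ} (hab : a ≤ b)
    (hF : ∀ s, b < s → F s = 0) :
    ∫⁻ s in Ioi a, F s = ∫⁻ s in Ioc a b, F s := by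
  rw [← Ioc_union_Ioi_eq_Ioi hab, lintegral_union measurableSet_Ioi Ioc_disjoint_Ioi_same,
    setLIntegral_congr_fun measurableSet_Ioi hF, lintegral_zero, add_zero]

theorem setLIntegral_Ioc_ofReal_mul_eq {X Y : ℝ → ℝ} {t : ℝ} (ht : 0 < t)
    (hX : AntitoneOn X (Ioi 0)) (hY : AntitoneOn Y (Ioi 0)) (hXt : 0 ≤ X t) (hYt : 0 ≤ Y t) :
    ∫⁻ s in Ioc 0 t, ENNReal.ofReal (X s * Y s)
      = ENNReal.ofReal (X t * Y t) * ENNReal.ofReal t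
        + ((∫⁻ s in Ioi 0, ENNReal.ofReal (X s - X t) * ENNReal.ofReal (Y s))
          + ENNReal.ofReal (X t) * ∫⁻ s in Ioi 0, ENNReal.ofReal (Y s - Y t)) := by
  have ht' : t ∈ Ioi 0 := ht
  have hXle : ∀ s, t < s → X s ≤ X t := fun s hs => hX ht' (ht.trans hs) hs.le
  have hYle : ∀ s, t < s → Y s ≤ Y t := fun s hs => hY ht' (ht.trans hs) hs.le
  have hA : ∫⁻ s in Ioi 0, ENNReal.ofReal (X s - X t) * ENNReal.ofReal (Y s)
      = ∫⁻ s in Ioc 0 t, ENNReal.ofReal (X s - X t) * ENNReal.ofReal (Y s) :=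
    setLIntegral_Ioi_eq_setLIntegral_Ioc ht.le fun s hs => by
      rw [ENNReal.ofReal_of_nonpos (sub_nonpos.2 (hXle s hs)), zero_mul]
  have hB : ∫⁻ s in Ioi 0, ENNReal.ofReal (Y s - Y t)
      = ∫⁻ s in Ioc 0 t, ENNReal.ofReal (Y s - Y t) :=
    setLIntegral_Ioi_eq_setLIntegral_Ioc ht.le fun s hs =>
      ENNReal.ofReal_of_nonpos (sub_nonpos.2 (hYle s hs))
  have hAm : AEMeasurable (fun s => ENNReal.ofReal (X s - X t) * ENNReal.ofReal (Y s))
      (volume.restrict (Ioc 0 t)) :=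
    ((aemeasurable_restrict_of_antitoneOn measurableSet_Ioc
      (hX.mono Ioc_subset_Ioi_self)).sub_const _).ennreal_ofReal.mul
      (aemeasurable_restrict_of_antitoneOn measurableSet_Ioc
        (hY.mono Ioc_subset_Ioi_self)).ennreal_ofReal
  rw [hA, hB, ← lintegral_const_mul' _ _ ENNReal.ofReal_ne_top, ← lintegral_add_left' hAm,
    show ENNReal.ofReal t = volume (Ioc 0 t) by simp, ← setLIntegral_const,
    ← lintegral_add_left measurable_const]
  refine setLIntegral_congr_fun measurableSet_Ioc fun s hs => ?_
  have hXs : X t ≤ X s := hX hs.1 ht' hs.2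
  have hYs : Y t ≤ Y s := hY hs.1 ht' hs.2
  have hXa : 0 ≤ X s - X t := sub_nonneg.2 hXs
  have hYb : 0 ≤ Y s - Y t := sub_nonneg.2 hYs
  have hXaY : 0 ≤ (X s - X t) * Y s := mul_nonneg hXa (hYt.trans hYs)
  rw [← ENNReal.ofReal_mul hXa, ← ENNReal.ofReal_mul hXt,
    ← ENNReal.ofReal_add hXaY (mul_nonneg hXt hYb),
    ← ENNReal.ofReal_add (mul_nonneg hXt hYt) (add_nonneg hXaY (mul_nonneg hXt hYb))]
  ring_nf

section Rearrangement

variable {α : Type*} [MeasurableSpace α] {μ : Measure α} {f : α → ℝ}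

theorem rearr_nonneg (μ : Measure α) (f : α → ℝ) (t : ℝ) : 0 ≤ rearr μ f t :=
  Real.sInf_nonneg fun _ hs => hs.1

theorem VanishesInMeasure.exists_measure_lt_abs_le (hm : Measurable f)
    (hv : VanishesInMeasure μ f) {t : ℝ} (ht : 0 < t) :
    ∃ s, 0 ≤ s ∧ μ {u | s < |f u|} ≤ ENNReal.ofReal t := by
  have hanti : Antitone fun r : ℝ => {u | r < |f u|} :=
    fun r r' hrr' u hu => lt_of_le_of_lt hrr' hu
  have hempty : ⋂ r : ℝ, {u | r < |f u|} = ∅ :=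
    eq_empty_of_forall_notMem fun u hu => lt_irrefl |f u| (mem_iInter.1 hu |f u|)
  have htend := tendsto_measure_iInter_atTop
    (fun r => (measurableSet_lt measurable_const hm.abs).nullMeasurableSet) hanti
    ⟨1, (hv 1 one_pos).ne⟩
  rw [hempty, measure_empty] at htend
  obtain ⟨s, hs, hs0⟩ :=
    ((htend.eventually (gt_mem_nhds (ENNReal.ofReal_pos.2 ht))).and
      (eventually_ge_atTop 0)).exists
  exact ⟨s, hs0, hs.le⟩

theorem rearr_le_iff (hm : Measurable f) (hv : VanishesInMeasure μ f) {t l : ℝ}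
    (ht : 0 < t) (hl : 0 < l) :
    rearr μ f t ≤ l ↔ μ {u | l < |f u|} ≤ ENNReal.ofReal t := by
  refine ⟨fun hle => ?_, fun hd => csInf_le ⟨0, fun _ hs => hs.1⟩ ⟨hl.le, hd⟩⟩
  have hunion : {u | l < |f u|} = ⋃ n : ℕ, {u | l + ((n : ℝ) + 1)⁻¹ < |f u|} := by
    ext u
    simp only [mem_ofPred_eq, mem_iUnion]
    refine ⟨fun hu => ?_, fun ⟨n, hn⟩ => lt_trans (lt_add_of_pos_right l (by positivity)) hn⟩
    obtain ⟨n, hn⟩ := exists_nat_one_div_lt (sub_pos.2 hu)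
    exact ⟨n, by rw [one_div] at hn; linarith⟩
  have hmono : Monotone fun n : ℕ => {u | l + ((n : ℝ) + 1)⁻¹ < |f u|} := by
    refine fun n n' hnn' => ofPred_subset_ofPred.2 fun u hu => lt_of_le_of_lt ?_ hu
    gcongr
  rw [hunion, hmono.measure_iUnion]
  refine iSup_le fun n => ?_
  obtain ⟨s, hs, hsl⟩ := exists_lt_of_csInf_lt (hv.exists_measure_lt_abs_le hm ht)
    (lt_of_le_of_lt hle (lt_add_of_pos_right l (by positivity : (0 : ℝ) < ((n : ℝ) + 1)⁻¹)))
  exact (measure_mono fun u hu => lt_trans hsl hu).trans hs.2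

theorem lt_rearr_iff (hm : Measurable f) (hv : VanishesInMeasure μ f) {t l : ℝ}
    (ht : 0 < t) (hl : 0 < l) :
    l < rearr μ f t ↔ ENNReal.ofReal t < μ {u | l < |f u|} :=
  lt_iff_lt_of_le_iff_le (rearr_le_iff hm hv ht hl)

theorem rearr_antitoneOn (hm : Measurable f) (hv : VanishesInMeasure μ f) :
    AntitoneOn (rearr μ f) (Ioi 0) := fun _ hs _ _ hst =>
  csInf_le_csInf ⟨0, fun _ hr => hr.1⟩ (hv.exists_measure_lt_abs_le hm hs)
    fun _ hr => ⟨hr.1, hr.2.trans (ENNReal.ofReal_le_ofReal hst)⟩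

theorem setOf_lt_rearr_inter_Ioi (hm : Measurable f) (hv : VanishesInMeasure μ f) {l : ℝ}
    (hl : 0 < l) :
    {s | l < rearr μ f s} ∩ Ioi 0 = Ioo 0 (μ {u | l < |f u|}).toReal := by
  ext s
  simp only [mem_inter_iff, mem_ofPred_eq, mem_Ioi, mem_Ioo]
  refine ⟨fun ⟨hls, hs⟩ => ⟨hs, ?_⟩, fun ⟨hs, hlt⟩ => ⟨?_, hs⟩⟩
  · rw [← ENNReal.ofReal_lt_iff_lt_toReal hs.le (hv l hl).ne]
    exact (lt_rearr_iff hm hv hs hl).1 hls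
  · rw [lt_rearr_iff hm hv hs hl, ENNReal.ofReal_lt_iff_lt_toReal hs.le (hv l hl).ne]
    exact hlt

theorem volume_setOf_lt_rearr_inter_Ioi (hm : Measurable f) (hv : VanishesInMeasure μ f)
    {l : ℝ} (hl : 0 < l) :
    volume ({s | l < rearr μ f s} ∩ Ioi 0) = μ {u | l < |f u|} := by
  rw [setOf_lt_rearr_inter_Ioi hm hv hl, Real.volume_Ioo, sub_zero,
    ENNReal.ofReal_toReal (hv l hl).ne]

theorem volume_setOf_lt_rearr_inter_setOf_lt_rearr_inter_Ioi {g : α → ℝ} (hfm : Measurable f)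
    (hgm : Measurable g) (hfv : VanishesInMeasure μ f) (hgv : VanishesInMeasure μ g)
    {l m : ℝ} (hl : 0 < l) (hm : 0 < m) :
    volume ({s | l < rearr μ f s} ∩ {s | m < rearr μ g s} ∩ Ioi 0)
      = min (μ {u | l < |f u|}) (μ {u | m < |g u|}) := by
  rw [inter_inter_distrib_right, setOf_lt_rearr_inter_Ioi hfm hfv hl,
    setOf_lt_rearr_inter_Ioi hgm hgv hm, Ioo_inter_Ioo, max_self, Real.volume_Ioo, sub_zero,
    ← ENNReal.toReal_min (hfv l hl).ne (hgv m hm).ne, ENNReal.ofReal_toReal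
      (min_lt_of_left_lt (hfv l hl)).ne]

theorem VanishesInMeasure.mul {g : α → ℝ} (hf : VanishesInMeasure μ f)
    (hg : VanishesInMeasure μ g) : VanishesInMeasure μ (f * g) := by
  intro ε hε
  have hsub : {u | ε < |(f * g) u|} ⊆ {u | √ε < |f u|} ∪ {u | √ε < |g u|} := by
    intro u hu
    by_contra hcon
    simp only [mem_union, mem_ofPred_eq, not_or, not_lt] at hcon
    have : |f u| * |g u| ≤ √ε * √ε := mul_le_mul hcon.1 hcon.2 (abs_nonneg _) (by positivity)
    rw [Real.mul_self_sqrt hε.le, ← abs_mul] at this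
    exact this.not_gt hu
  exact (measure_mono hsub).trans_lt ((measure_union_le _ _).trans_lt
    (ENNReal.add_lt_top.2 ⟨hf _ (Real.sqrt_pos.2 hε), hg _ (Real.sqrt_pos.2 hε)⟩))

theorem aemeasurable_rearr (hm : Measurable f) (hv : VanishesInMeasure μ f) :
    AEMeasurable (rearr μ f) (volume.restrict (Ioi 0)) :=
  aemeasurable_restrict_of_antitoneOn measurableSet_Ioi (rearr_antitoneOn hm hv)

theorem setLIntegral_Ioi_ofReal_rearr_sub (hm : Measurable f) (hv : VanishesInMeasure μ f)
    {c : ℝ} (hc : 0 ≤ c) :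
    ∫⁻ s in Ioi 0, ENNReal.ofReal (rearr μ f s - c)
      = ∫⁻ u, ENNReal.ofReal (|f u| - c) ∂μ := by
  rw [lintegral_ofReal_eq_setLIntegral_measure_lt ((aemeasurable_rearr hm hv).sub_const c),
    lintegral_ofReal_eq_setLIntegral_measure_lt (hm.abs.sub_const c).aemeasurable]
  refine setLIntegral_congr_fun measurableSet_Ioi fun l (hl : 0 < l) => ?_
  simp only [lt_sub_iff_add_lt]
  rw [Measure.restrict_apply' measurableSet_Ioi,
    volume_setOf_lt_rearr_inter_Ioi hm hv (by positivity)]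

theorem lintegral_ofReal_abs_sub_mul_le_rearr [SFinite μ] {x y : α → ℝ} (hxm : Measurable x)
    (hym : Measurable y) (hxv : VanishesInMeasure μ x) (hyv : VanishesInMeasure μ y) {a : ℝ}
    (ha : 0 ≤ a) :
    ∫⁻ u, ENNReal.ofReal (|x u| - a) * ENNReal.ofReal |y u| ∂μ
      ≤ ∫⁻ s in Ioi 0, ENNReal.ofReal (rearr μ x s - a) * ENNReal.ofReal (rearr μ y s) := by
  refine lintegral_ofReal_mul_ofReal_le_of_measure_inter_le (hxm.abs.sub_const a).aemeasurable
    hym.abs.aemeasurable ((aemeasurable_rearr hxm hxv).sub_const a) (aemeasurable_rearr hym hyv)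
    fun l (hl : 0 < l) m hm => ?_
  simp only [lt_sub_iff_add_lt]
  rw [Measure.restrict_apply' measurableSet_Ioi,
    volume_setOf_lt_rearr_inter_setOf_lt_rearr_inter_Ioi hxm hym hxv hyv (by positivity) hm]
  exact le_min (measure_mono inter_subset_left) (measure_mono inter_subset_right)

end Rearrangement

instance : SFinite mu0 := inferInstanceAs (SFinite (volume.restrict _))

/-- Submajorization of a product by the product of decreasing rearrangements:
`∫₀ᵗ (xy)^*(s) ds ≤ ∫₀ᵗ x^*(s) y^*(s) ds` for all `t > 0`. -/
theorem mul_submajorized {x y : ℝ → ℝ} (hxm : Measurable x) (hym : Measurable y)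
    (hxv : VanishesInMeasure mu0 x) (hyv : VanishesInMeasure mu0 y) :
    ∀ t : ℝ, 0 < t →
      (∫⁻ s in Set.Ioc 0 t, ENNReal.ofReal (rearr mu0 (x * y) s))
        ≤ ∫⁻ s in Set.Ioc 0 t, ENNReal.ofReal (rearr mu0 x s * rearr mu0 y s) := by
  intro t ht
  set a := rearr mu0 x t
  set b := rearr mu0 y t
  have ha : 0 ≤ a := rearr_nonneg _ _ _
  have hb : 0 ≤ b := rearr_nonneg _ _ _
  calc ∫⁻ s in Ioc 0 t, ENNReal.ofReal (rearr mu0 (x * y) s)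
      ≤ ENNReal.ofReal (a * b) * ENNReal.ofReal t
          + ∫⁻ s in Ioi 0, ENNReal.ofReal (rearr mu0 (x * y) s - a * b) := by
        have hcut := setLIntegral_ofReal_le_mul_measure_add (μ := volume) (Ioc 0 t)
          (rearr mu0 (x * y)) (a * b)
        rw [Real.volume_Ioc, sub_zero] at hcut
        exact hcut.trans (by gcongr; exact Ioc_subset_Ioi_self)
    _ = ENNReal.ofReal (a * b) * ENNReal.ofReal t
          + ∫⁻ u, ENNReal.ofReal (|(x * y) u| - a * b) ∂mu0 := by
        rw [setLIntegral_Ioi_ofReal_rearr_sub (hxm.mul hym) (hxv.mul hyv) (by positivity)]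
    _ ≤ ENNReal.ofReal (a * b) * ENNReal.ofReal t
          + (∫⁻ u, ENNReal.ofReal (|x u| - a) * ENNReal.ofReal |y u| ∂mu0
            + ENNReal.ofReal a * ∫⁻ u, ENNReal.ofReal (|y u| - b) ∂mu0) := by
        gcongr
        exact lintegral_ofReal_abs_mul_sub_le hxm hym ha b
    _ ≤ ENNReal.ofReal (a * b) * ENNReal.ofReal t
          + ((∫⁻ s in Ioi 0, ENNReal.ofReal (rearr mu0 x s - a) * ENNReal.ofReal (rearr mu0 y s))
            + ENNReal.ofReal a * ∫⁻ s in Ioi 0, ENNReal.ofReal (rearr mu0 y s - b)) := by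
        rw [setLIntegral_Ioi_ofReal_rearr_sub hym hyv hb]
        gcongr _ + (?_ + _)
        exact lintegral_ofReal_abs_sub_mul_le_rearr hxm hym hxv hyv ha
    _ = ∫⁻ s in Ioc 0 t, ENNReal.ofReal (rearr mu0 x s * rearr mu0 y s) :=
        (setLIntegral_Ioc_ofReal_mul_eq ht (rearr_antitoneOn hxm hxv)
          (rearr_antitoneOn hym hyv) ha hb).symm
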